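/- arXiv:2406.05116 — 7 statements merged into one kernel-verified Lean document; each statement's English description precedes it below -/
import Mathlib

section
/- Let f : [0,1] → ℝ be C² with f(0)=0, f(1)=1, f'(s)>0 on (0,1), f'(0)=f'(1)=0, a unique inflection sI with f''>0 on (0,sI) and f''<0 on (sI,1). Let h > 0 and 0 < v ≤ (1+h)^{-1}. Then the line l(s) = v(s+h) intersects the graph of f at exactly one point s^c ∈ (0,1), and at this point f'(s^c) > v. -/
/-!
Write `g = f - l`. Since `f'` increases strictly up to `sI` and decreases strictly after it,
with `f'(0) = f'(1) = 0 < v < 1 ≤ f'(sI)` (the last by the mean value theorem on `[0, 1]`),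
`g' = f' - v` is negative, then positive on some `(α, β)`, then negative again. So `g` falls,
rises, falls; as `g(0) = -v h < 0` and `g(1) = 1 - v (1 + h) ≥ 0`, it stays negative on `[0, α]`,
positive on `[β, 1)`, and crosses zero exactly once, inside `(α, β)`, where `f' > v`.
-/

open Set

theorem isMaxOn_of_monotoneOn_of_antitoneOn {φ : ℝ → ℝ} {a b c : ℝ}
    (hmono : MonotoneOn φ (Icc a c)) (hanti : AntitoneOn φ (Icc c b)) :
    IsMaxOn φ (Icc a b) c := by
  intro x hx
  rcases le_total x c with hxc | hcx
  · exact hmono ⟨hx.1, hxc⟩ ⟨hx.1.trans hxc, le_rfl⟩ hxc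
  · exact hanti ⟨le_rfl, hcx.trans hx.2⟩ ⟨hcx, hx.2⟩ hcx

theorem slope_le_of_isMaxOn_deriv {f : ℝ → ℝ} {a b c : ℝ} (hab : a < b)
    (hfc : ContinuousOn f (Icc a b)) (hfd : DifferentiableOn ℝ f (Ioo a b))
    (hmax : IsMaxOn (deriv f) (Icc a b) c) :
    (f b - f a) / (b - a) ≤ deriv f c := by
  obtain ⟨x, hx, hslope⟩ := exists_deriv_eq_slope f hab hfc hfd
  exact hslope ▸ hmax (Ioo_subset_Icc_self hx)

theorem exists_crossings_of_strictMonoOn_of_strictAntiOn {φ : ℝ → ℝ} {a b c v : ℝ}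
    (hφ : ContinuousOn φ (Icc a b)) (hmono : StrictMonoOn φ (Icc a c))
    (hanti : StrictAntiOn φ (Icc c b)) (hc : c ∈ Icc a b)
    (ha : φ a < v) (hpeak : v < φ c) (hb : φ b < v) :
    ∃ α β, a < α ∧ α < β ∧ β < b ∧ (∀ s ∈ Ioo a α, φ s < v) ∧
      (∀ s ∈ Ioo α β, v < φ s) ∧ (∀ s ∈ Ioo β b, φ s < v) := by
  obtain ⟨hac, hcb⟩ := hc
  obtain ⟨α, hα, hφα⟩ :=
    intermediate_value_Ioo hac (hφ.mono (Icc_subset_Icc_right hcb)) ⟨ha, hpeak⟩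
  obtain ⟨β, hβ, hφβ⟩ :=
    intermediate_value_Ioo' hcb (hφ.mono (Icc_subset_Icc_left hac)) ⟨hb, hpeak⟩
  refine ⟨α, β, hα.1, hα.2.trans hβ.1, hβ.2, fun s hs => ?_, fun s hs => ?_, fun s hs => ?_⟩
  · exact hφα ▸ hmono ⟨hs.1.le, (hs.2.trans hα.2).le⟩ ⟨hα.1.le, hα.2.le⟩ hs.2
  · rcases le_total s c with hsc | hcs
    · exact hφα ▸ hmono ⟨hα.1.le, hα.2.le⟩ ⟨(hα.1.trans hs.1).le, hsc⟩ hs.1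
    · exact hφβ ▸ hanti ⟨hcs, (hs.2.trans hβ.2).le⟩ ⟨hβ.1.le, hβ.2.le⟩ hs.2
  · exact hφβ ▸ hanti ⟨hβ.1.le, hβ.2.le⟩ ⟨(hβ.1.trans hs.1).le, hs.2.le⟩ hs.1

theorem exists_unique_zero_of_deriv_neg_pos_neg {g : ℝ → ℝ} {a α β b : ℝ}
    (hg : ContinuousOn g (Icc a b)) (haα : a ≤ α) (hαβ : α < β) (hβb : β < b)
    (hfall₁ : ∀ s ∈ Ioo a α, deriv g s < 0) (hrise : ∀ s ∈ Ioo α β, 0 < deriv g s)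
    (hfall₂ : ∀ s ∈ Ioo β b, deriv g s < 0) (hga : g a < 0) (hgb : 0 ≤ g b) :
    ∃ c ∈ Ioo α β, ∀ s ∈ Ioo a b, g s = 0 ↔ s = c := by
  have anti₁ : StrictAntiOn g (Icc a α) :=
    strictAntiOn_of_deriv_neg (convex_Icc _ _)
      (hg.mono (Icc_subset_Icc_right (hαβ.trans hβb).le)) (by rwa [interior_Icc])
  have mono : StrictMonoOn g (Icc α β) :=
    strictMonoOn_of_deriv_pos (convex_Icc _ _)
      (hg.mono (Icc_subset_Icc haα hβb.le)) (by rwa [interior_Icc])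
  have anti₂ : StrictAntiOn g (Icc β b) :=
    strictAntiOn_of_deriv_neg (convex_Icc _ _)
      (hg.mono (Icc_subset_Icc_left (haα.trans hαβ.le))) (by rwa [interior_Icc])
  have neg : ∀ s ∈ Icc a α, g s < 0 := fun s hs =>
    (anti₁.antitoneOn ⟨le_rfl, haα⟩ hs hs.1).trans_lt hga
  have pos : ∀ s ∈ Ico β b, 0 < g s := fun s hs =>
    hgb.trans_lt (anti₂ ⟨hs.1, hs.2.le⟩ ⟨hβb.le, le_rfl⟩ hs.2)
  obtain ⟨c, hc, hgc⟩ := intermediate_value_Ioo hαβ.le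
    (hg.mono (Icc_subset_Icc haα hβb.le)) ⟨neg α ⟨haα, le_rfl⟩, pos β ⟨le_rfl, hβb⟩⟩
  refine ⟨c, hc, fun s hs => ⟨fun hgs => ?_, fun hsc => hsc ▸ hgc⟩⟩
  have hαs : α < s := lt_of_not_ge fun hsα => (neg s ⟨hs.1.le, hsα⟩).ne hgs
  have hsβ : s < β := lt_of_not_ge fun hβs => (pos s ⟨hβs, hs.2⟩).ne' hgs
  exact mono.injOn ⟨hαs.le, hsβ.le⟩ ⟨hc.1.le, hc.2.le⟩ (hgs.trans hgc.symm)

theorem stmt1_general (f : ℝ → ℝ) (sI h v : ℝ)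
    (hf : ContDiff ℝ 2 f) (hf0 : f 0 = 0) (hf1 : f 1 = 1)
    (hf'0 : deriv f 0 = 0) (hf'1 : deriv f 1 = 0)
    (hsI : sI ∈ Ioo (0:ℝ) 1)
    (hconv : ∀ s ∈ Ioo (0:ℝ) sI, 0 < deriv (deriv f) s)
    (hconc : ∀ s ∈ Ioo sI 1, deriv (deriv f) s < 0)
    (hh : 0 < h) (hv : 0 < v) (hvle : v ≤ (1 + h)⁻¹) :
    (∃! s, s ∈ Ioo (0:ℝ) 1 ∧ f s = v * (s + h)) ∧
    (∀ s ∈ Ioo (0:ℝ) 1, f s = v * (s + h) → v < deriv f s) := by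
  have hfd : Differentiable ℝ f := hf.differentiable two_ne_zero
  have hf'c : Continuous (deriv f) := hf.continuous_deriv one_le_two
  have hmono : StrictMonoOn (deriv f) (Icc 0 sI) := strictMonoOn_of_deriv_pos
    (convex_Icc _ _) hf'c.continuousOn (by rwa [interior_Icc])
  have hanti : StrictAntiOn (deriv f) (Icc sI 1) := strictAntiOn_of_deriv_neg
    (convex_Icc _ _) hf'c.continuousOn (by rwa [interior_Icc])
  have hpeak : 1 ≤ deriv f sI := by
    simpa [hf0, hf1] using slope_le_of_isMaxOn_deriv one_pos hfd.continuous.continuousOn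
      hfd.differentiableOn (isMaxOn_of_monotoneOn_of_antitoneOn hmono.monotoneOn hanti.antitoneOn)
  have hvh : v * (1 + h) ≤ 1 := (le_div_iff₀ (by linarith)).1 (by rwa [one_div])
  have hv1 : v < 1 := by nlinarith [mul_pos hv hh]
  obtain ⟨α, β, hα, hαβ, hβ, hfall₁, hrise, hfall₂⟩ :=
    exists_crossings_of_strictMonoOn_of_strictAntiOn hf'c.continuousOn hmono hanti
      (Ioo_subset_Icc_self hsI) (by rwa [hf'0]) (hv1.trans_le hpeak) (by rwa [hf'1])
  set g : ℝ → ℝ := fun s => f s - v * (s + h)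
  have hg' : ∀ s, deriv g s = deriv f s - v := fun s =>
    ((hfd s).hasDerivAt.sub (((hasDerivAt_id s).add_const h).const_mul v)).deriv.trans (by simp)
  obtain ⟨c, hc, hzero⟩ := exists_unique_zero_of_deriv_neg_pos_neg (g := g)
    (hfd.continuous.sub (by fun_prop)).continuousOn hα.le hαβ hβ
    (by simpa [hg'] using hfall₁) (by simpa [hg'] using hrise) (by simpa [hg'] using hfall₂)
    (by simpa [g, hf0] using mul_pos hv hh) (by simp only [g, hf1]; linarith)
  have hcross : ∀ s ∈ Ioo (0:ℝ) 1, f s = v * (s + h) ↔ s = c := by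
    simpa [g, sub_eq_zero] using hzero
  have hc01 : c ∈ Ioo (0:ℝ) 1 := ⟨hα.trans hc.1, hc.2.trans hβ⟩
  exact ⟨⟨c, ⟨hc01, (hcross c hc01).2 rfl⟩, fun s hs => (hcross s hs.1).1 hs.2⟩,
    fun s hs hfs => (hcross s hs).1 hfs ▸ hrise c hc⟩

/-- The line l(s) = v(s+h) intersects the S-shaped flux f exactly once in (0,1),
and at this point f' > v. -/
theorem stmt1 (f : ℝ → ℝ) (sI h v : ℝ)
    (hf : ContDiff ℝ 2 f) (hf0 : f 0 = 0) (hf1 : f 1 = 1)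
    (hf' : ∀ s ∈ Ioo (0:ℝ) 1, 0 < deriv f s)
    (hf'0 : deriv f 0 = 0) (hf'1 : deriv f 1 = 0)
    (hsI : sI ∈ Ioo (0:ℝ) 1)
    (hconv : ∀ s ∈ Ioo (0:ℝ) sI, 0 < deriv (deriv f) s)
    (hconc : ∀ s ∈ Ioo sI 1, deriv (deriv f) s < 0)
    (hh : 0 < h) (hv : 0 < v) (hvle : v ≤ (1 + h)⁻¹) :
    (∃! s, s ∈ Ioo (0:ℝ) 1 ∧ f s = v * (s + h)) ∧
    (∀ s ∈ Ioo (0:ℝ) 1, f s = v * (s + h) → v < deriv f s) :=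
  stmt1_general f sI h v hf hf0 hf1 hf'0 hf'1 hsI hconv hconc hh hv hvle
end

section
/- With f, U = 1/f(s), F(U) = −s/f(s) as above, the second derivative satisfies F''(U(s)) = f''(s) · f(s)³ / f'(s)³ for all s ∈ (0,1). In particular F''(U(s)) has the same sign as f''(s), so F has a unique inflection point U^I = 1/f(sI), with F'' < 0 for 1 < U < U^I and F'' > 0 for U > U^I. -/
/-!
Since `f' > 0`, the map `s ↦ 1 / f s` has a local inverse near every `s ∈ (0, 1)`, so the
relation `F (1 / f s) = -s / f s` determines `F` near `1 / f s`. The chain rule through that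
local inverse gives `F' (1 / f s) = f s / f' s - s`, and applied once more,
`F'' (1 / f s) = f'' s · f s ^ 3 / f' s ^ 3`, which has the sign of `f''` since `f, f' > 0`.
By the intermediate value theorem every `U ∈ (1, 1 / f sI)` is `1 / f s` for some `s ∈ (sI, 1)`
and every `U > 1 / f sI` is `1 / f s` for some `s ∈ (0, sI)`.
-/

open Set Filter Topology

theorem HasStrictDerivAt.hasDerivAt_of_eventually_comp_eq
    {𝕜 : Type*} [NontriviallyNormedField 𝕜] [CompleteSpace 𝕜]
    {p u q : 𝕜 → 𝕜} {x u' q' : 𝕜}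
    (hu : HasStrictDerivAt u u' x) (hu' : u' ≠ 0) (hq : HasDerivAt q q' x)
    (h : ∀ᶠ y in 𝓝 x, p (u y) = q y) :
    HasDerivAt p (q' / u') (u x) := by
  set φ := hu.localInverse u u' x hu'
  have hφ_deriv : HasStrictDerivAt φ u'⁻¹ (u x) := hu.to_localInverse hu'
  have hφ_cont : ContinuousAt φ (u x) :=
    (hu.hasStrictFDerivAt_equiv hu').localInverse_continuousAt
  have hφ_apply : φ (u x) = x := (hu.hasStrictFDerivAt_equiv hu').localInverse_apply_image
  have hφ_right_inv : ∀ᶠ y in 𝓝 (u x), u (φ y) = y :=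
    (hu.hasStrictFDerivAt_equiv hu').eventually_right_inverse
  have h_pull : ∀ᶠ y in 𝓝 (u x), p (u (φ y)) = q (φ y) := by
    have hφ_tendsto := hφ_cont.tendsto
    rw [hφ_apply] at hφ_tendsto
    exact hφ_tendsto.eventually h
  have hp_eq : p =ᶠ[𝓝 (u x)] q ∘ φ := by
    filter_upwards [hφ_right_inv, h_pull] with y h_inv h_eq
    rwa [h_inv] at h_eq
  have hq_comp : HasDerivAt (q ∘ φ) (q' * u'⁻¹) (u x) :=
    (hφ_apply ▸ hq).comp (u x) hφ_deriv.hasDerivAt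
  exact div_eq_mul_inv q' u' ▸ hq_comp.congr_of_eventuallyEq hp_eq

theorem deriv_of_eventually_comp_one_div_eq {f p q : ℝ → ℝ} {x q' : ℝ}
    (hf : ContDiffAt ℝ 1 f x) (hfx : f x ≠ 0) (hf'x : deriv f x ≠ 0)
    (hq : HasDerivAt q q' x) (h : ∀ᶠ y in 𝓝 x, p (1 / f y) = q y) :
    deriv p (1 / f x) = -(q' * f x ^ 2 / deriv f x) := by
  have hu : HasStrictDerivAt (fun y => 1 / f y) (-(deriv f x) / f x ^ 2) x :=
    ((hasStrictDerivAt_const x (1 : ℝ)).div (hf.hasStrictDerivAt one_ne_zero)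
      hfx).congr_deriv (by ring)
  have hu' : -(deriv f x) / f x ^ 2 ≠ 0 := div_ne_zero (neg_ne_zero.2 hf'x) (pow_ne_zero 2 hfx)
  rw [(hu.hasDerivAt_of_eventually_comp_eq hu' hq h).deriv]
  field_simp

section LagrangeFlux

variable {f F : ℝ → ℝ} {s : Set ℝ}

theorem deriv_lagrangeFlux (hs : IsOpen s) (hf : ContDiff ℝ 1 f)
    (hf' : ∀ x ∈ s, 0 < deriv f x) (hfpos : ∀ x ∈ s, 0 < f x)
    (hF : ∀ x ∈ s, F (1 / f x) = -(x / f x)) {x : ℝ} (hx : x ∈ s) :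
    deriv F (1 / f x) = f x / deriv f x - x := by
  have hfx := (hfpos x hx).ne'
  have hf'x := (hf' x hx).ne'
  have hq : HasDerivAt (fun y => -(y / f y)) (-((1 * f x - x * deriv f x) / f x ^ 2)) x :=
    ((hasDerivAt_id x).div (hf.differentiable one_ne_zero x).hasDerivAt hfx).neg
  have h : ∀ᶠ y in 𝓝 x, F (1 / f y) = -(y / f y) := eventually_of_mem (hs.mem_nhds hx) hF
  rw [deriv_of_eventually_comp_one_div_eq hf.contDiffAt hfx hf'x hq h]
  field_simp

theorem deriv_deriv_lagrangeFlux (hs : IsOpen s) (hf : ContDiff ℝ 2 f)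
    (hf' : ∀ x ∈ s, 0 < deriv f x) (hfpos : ∀ x ∈ s, 0 < f x)
    (hF : ∀ x ∈ s, F (1 / f x) = -(x / f x)) {x : ℝ} (hx : x ∈ s) :
    deriv (deriv F) (1 / f x) = deriv (deriv f) x * f x ^ 3 / deriv f x ^ 3 := by
  have hfx := (hfpos x hx).ne'
  have hf'x := (hf' x hx).ne'
  have hf₁ : ContDiff ℝ 1 f := hf.of_le (by norm_num)
  have hf'_diff : Differentiable ℝ (deriv f) :=
    (hf.iterate_deriv' 1 1).differentiable one_ne_zero
  have hq : HasDerivAt (fun y => f y / deriv f y - y)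
      ((deriv f x * deriv f x - f x * deriv (deriv f) x) / deriv f x ^ 2 - 1) x :=
    ((hf₁.differentiable one_ne_zero x).hasDerivAt.div (hf'_diff x).hasDerivAt hf'x).sub
      (hasDerivAt_id x)
  have h : ∀ᶠ y in 𝓝 x, deriv F (1 / f y) = f y / deriv f y - y :=
    eventually_of_mem (hs.mem_nhds hx) fun y hy => deriv_lagrangeFlux hs hf₁ hf' hfpos hF hy
  rw [deriv_of_eventually_comp_one_div_eq hf₁.contDiffAt hfx hf'x hq h]
  field_simp
  ring

end LagrangeFlux

theorem exists_one_div_eq_of_one_div_mem_Ioo {f : ℝ → ℝ} {a b U : ℝ} (hab : a ≤ b)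
    (hf : ContinuousOn f (Icc a b)) (hU : 1 / U ∈ Ioo (f a) (f b)) :
    ∃ x ∈ Ioo a b, 1 / f x = U := by
  obtain ⟨x, hx, hfx⟩ := intermediate_value_Ioo hab hf hU
  exact ⟨x, hx, by rw [hfx, one_div_one_div]⟩

theorem stmt5_general (f F : ℝ → ℝ) (sI : ℝ)
    (hf : ContDiff ℝ 2 f) (hf0 : f 0 = 0) (hf1 : f 1 = 1)
    (hf' : ∀ x ∈ Ioo (0:ℝ) 1, 0 < deriv f x)
    (hfpos : ∀ x ∈ Ioo (0:ℝ) 1, 0 < f x)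
    (hsI : sI ∈ Ioo (0:ℝ) 1)
    (hconv : ∀ x ∈ Ioo (0:ℝ) sI, 0 < deriv (deriv f) x)
    (hconc : ∀ x ∈ Ioo sI 1, deriv (deriv f) x < 0)
    (hF : ∀ x ∈ Ioo (0:ℝ) 1, F (1 / f x) = -(x / f x)) :
    (∀ x ∈ Ioo (0:ℝ) 1,
      deriv (deriv F) (1 / f x) = deriv (deriv f) x * (f x) ^ 3 / (deriv f x) ^ 3) ∧
    (∀ U ∈ Ioo (1:ℝ) (1 / f sI), deriv (deriv F) U < 0) ∧
    (∀ U ∈ Ioi (1 / f sI), 0 < deriv (deriv F) U) := by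
  have formula : ∀ x ∈ Ioo (0:ℝ) 1,
      deriv (deriv F) (1 / f x) = deriv (deriv f) x * f x ^ 3 / deriv f x ^ 3 :=
    fun _ hx => deriv_deriv_lagrangeFlux isOpen_Ioo hf hf' hfpos hF hx
  have hfsI : 0 < f sI := hfpos sI hsI
  refine ⟨formula, fun U ⟨hU1, hUsI⟩ => ?_, fun U (hUsI : 1 / f sI < U) => ?_⟩
  · have hU : 1 / U ∈ Ioo (f sI) (f 1) := by
      rw [hf1]
      exact ⟨by rwa [lt_one_div hfsI (by linarith)], by rwa [div_lt_one (by linarith)]⟩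
    obtain ⟨x, hx, rfl⟩ :=
      exists_one_div_eq_of_one_div_mem_Ioo hsI.2.le hf.continuous.continuousOn hU
    have hx01 : x ∈ Ioo (0:ℝ) 1 := ⟨hsI.1.trans hx.1, hx.2⟩
    rw [formula x hx01]
    exact div_neg_of_neg_of_pos (mul_neg_of_neg_of_pos (hconc x hx) (pow_pos (hfpos x hx01) 3))
      (pow_pos (hf' x hx01) 3)
  · have hU0 : 0 < U := (one_div_pos.2 hfsI).trans hUsI
    have hU : 1 / U ∈ Ioo (f 0) (f sI) := by
      rw [hf0]
      exact ⟨one_div_pos.2 hU0, by rwa [one_div_lt hU0 hfsI]⟩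
    obtain ⟨x, hx, rfl⟩ :=
      exists_one_div_eq_of_one_div_mem_Ioo hsI.1.le hf.continuous.continuousOn hU
    have hx01 : x ∈ Ioo (0:ℝ) 1 := ⟨hx.1, hx.2.trans hsI.2⟩
    rw [formula x hx01]
    exact div_pos (mul_pos (hconv x hx) (pow_pos (hfpos x hx01) 3)) (pow_pos (hf' x hx01) 3)

/-- The second derivative of the Lagrange flux: F''(U(s)) = f''(s)·f(s)³/f'(s)³;
F has a unique inflection U^I = 1/f(sI): F'' < 0 on (1, U^I) and F'' > 0 beyond. -/
theorem stmt5 (f F : ℝ → ℝ) (sI : ℝ)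
    (hf : ContDiff ℝ 2 f) (hf0 : f 0 = 0) (hf1 : f 1 = 1)
    (hf' : ∀ x ∈ Ioo (0:ℝ) 1, 0 < deriv f x)
    (hfpos : ∀ x ∈ Ioo (0:ℝ) 1, 0 < f x)
    (hf_lim : Filter.Tendsto f (nhdsWithin 0 (Ioi 0)) (nhds 0))
    (hsI : sI ∈ Ioo (0:ℝ) 1)
    (hconv : ∀ x ∈ Ioo (0:ℝ) sI, 0 < deriv (deriv f) x)
    (hconc : ∀ x ∈ Ioo sI 1, deriv (deriv f) x < 0)
    (hF : ∀ x ∈ Ioo (0:ℝ) 1, F (1 / f x) = -(x / f x)) :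
    (∀ x ∈ Ioo (0:ℝ) 1,
      deriv (deriv F) (1 / f x) = deriv (deriv f) x * (f x) ^ 3 / (deriv f x) ^ 3) ∧
    (∀ U ∈ Ioo (1:ℝ) (1 / f sI), deriv (deriv F) U < 0) ∧
    (∀ U ∈ Ioi (1 / f sI), 0 < deriv (deriv F) U) :=
  stmt5_general f F sI hf hf0 hf1 hf' hfpos hsI hconv hconc hF
end

section
/- Let f be S-shaped as above and let s^{wf} ∈ (sI, 1) be the unique root of f(s) = s f'(s) in (0,1). Then U^{max} = 1/f(s^{wf}) is the unique global maximum point of F(U) = −s(U)/f(s(U)) on (1,∞): F'(U) > 0 for U ∈ (1, U^{max}) and F'(U) < 0 for U ∈ (U^{max}, ∞). Moreover U^{max} < U^I = 1/f(sI). -/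
/-!
Write ψ(s) = f(s) - s f'(s). Differentiating `F (1 / f s) = -(s / f s)` through the local inverse
of `s ↦ 1 / f s` gives `F'(1 / f s) = ψ(s) / f'(s)`, so `F'` has the sign of `ψ`. Since
`ψ' = -s f''`, `ψ` decreases on `[0, sI]` from `ψ(0) = 0` and increases on `[sI, 1]` through its
root `swf`, so `ψ < 0` on `(0, swf)` and `ψ > 0` on `(swf, 1)`. As `f` increases, `s ↦ 1 / f s`
is decreasing and maps `(swf, 1)` onto `(1, U^max)`, `(0, swf)` onto `(U^max, ∞)`, and `sI < swf`
to `U^I > U^max`.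
-/

open Set Filter Topology

theorem HasStrictDerivAt.hasDerivAt_of_comp_eventuallyEq {𝕜 : Type*} [NontriviallyNormedField 𝕜]
    [CompleteSpace 𝕜] {φ G F : 𝕜 → 𝕜} {φ' G' s : 𝕜} (hφ : HasStrictDerivAt φ φ' s)
    (hφ' : φ' ≠ 0) (hG : HasDerivAt G G' s) (hFG : ∀ᶠ x in 𝓝 s, F (φ x) = G x) :
    HasDerivAt F (G' / φ') (φ s) := by
  set g := hφ.localInverse φ φ' s hφ'
  have hgs : g (φ s) = s := (hφ.eventually_left_inverse hφ').self_of_nhds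
  have hg : HasDerivAt g φ'⁻¹ (φ s) := (hφ.to_localInverse hφ').hasDerivAt
  have hFG' : ∀ᶠ y in 𝓝 (φ s), F (φ (g y)) = G (g y) :=
    hg.continuousAt.tendsto.eventually (hgs ▸ hFG)
  have hF : G ∘ g =ᶠ[𝓝 (φ s)] F := by
    filter_upwards [hFG', hφ.eventually_right_inverse hφ'] with y h₁ h₂
    rw [Function.comp_apply, ← h₁, h₂]
  rw [div_eq_mul_inv]
  exact ((hgs ▸ hG).comp (φ s) hg).congr_of_eventuallyEq hF.symm

theorem hasDerivAt_of_comp_one_div_eq {f F : ℝ → ℝ} {s : ℝ} (hf : ContDiffAt ℝ 1 f s)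
    (hfs : f s ≠ 0) (hf's : deriv f s ≠ 0) (hF : ∀ᶠ x in 𝓝 s, F (1 / f x) = -(x / f x)) :
    HasDerivAt F ((f s - s * deriv f s) / deriv f s) (1 / f s) := by
  have hstrict : HasStrictDerivAt f (deriv f s) s := hf.hasStrictDerivAt one_ne_zero
  have hφ := (hasStrictDerivAt_const s (1 : ℝ)).fun_div hstrict hfs
  have hG := ((hasDerivAt_id' s).fun_div hstrict.hasDerivAt hfs).fun_neg
  have hφ' : (0 * f s - 1 * deriv f s) / f s ^ 2 ≠ 0 := by
    simpa [hfs] using hf's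
  refine (hφ.hasDerivAt_of_comp_eventuallyEq hφ' hG hF).congr_deriv ?_
  simp only [zero_mul, zero_sub, one_mul]
  field_simp

section SubMulDeriv

variable {f : ℝ → ℝ}

theorem hasDerivAt_sub_mul_deriv (hf : Differentiable ℝ f) (hf' : Differentiable ℝ (deriv f))
    (x : ℝ) :
    HasDerivAt (fun y => f y - y * deriv f y) (-(x * deriv (deriv f) x)) x := by
  refine ((hf x).hasDerivAt.fun_sub ((hasDerivAt_id' x).fun_mul (hf' x).hasDerivAt)).congr_deriv ?_
  ring

theorem strictMonoOn_sub_mul_deriv (hf : Differentiable ℝ f) (hf' : Differentiable ℝ (deriv f))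
    {a b : ℝ} (ha : 0 ≤ a)
    (hconc : ∀ x ∈ Ioo a b, deriv (deriv f) x < 0) :
    StrictMonoOn (fun x => f x - x * deriv f x) (Icc a b) := by
  refine strictMonoOn_of_deriv_pos (convex_Icc a b)
    (fun x _ => (hasDerivAt_sub_mul_deriv hf hf' x).continuousAt.continuousWithinAt) ?_
  intro x hx
  rw [interior_Icc] at hx
  rw [(hasDerivAt_sub_mul_deriv hf hf' x).deriv, neg_pos]
  exact mul_neg_of_pos_of_neg (ha.trans_lt hx.1) (hconc x hx)

theorem strictAntiOn_sub_mul_deriv (hf : Differentiable ℝ f) (hf' : Differentiable ℝ (deriv f))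
    {a b : ℝ} (ha : 0 ≤ a)
    (hconv : ∀ x ∈ Ioo a b, 0 < deriv (deriv f) x) :
    StrictAntiOn (fun x => f x - x * deriv f x) (Icc a b) := by
  refine strictAntiOn_of_deriv_neg (convex_Icc a b)
    (fun x _ => (hasDerivAt_sub_mul_deriv hf hf' x).continuousAt.continuousWithinAt) ?_
  intro x hx
  rw [interior_Icc] at hx
  rw [(hasDerivAt_sub_mul_deriv hf hf' x).deriv, neg_lt_zero]
  exact mul_pos (ha.trans_lt hx.1) (hconv x hx)

end SubMulDeriv

theorem neg_of_strictAntiOn_of_strictMonoOn {ψ : ℝ → ℝ} {a m r b : ℝ}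
    (hanti : StrictAntiOn ψ (Icc a m)) (hmono : StrictMonoOn ψ (Icc m b))
    (ha : ψ a = 0) (hr : ψ r = 0) (ham : a ≤ m) (hr' : r ∈ Ioc m b) {s : ℝ} (hs : s ∈ Ioo a r) :
    ψ s < 0 := by
  rcases le_or_gt s m with hsm | hms
  · exact ha ▸ hanti ⟨le_rfl, ham⟩ ⟨hs.1.le, hsm⟩ hs.1
  · exact hr ▸ hmono ⟨hms.le, hs.2.le.trans hr'.2⟩ ⟨hr'.1.le, hr'.2⟩ hs.2

theorem StrictMonoOn.one_div_lt_one_div_iff {f : ℝ → ℝ} {S : Set ℝ} (hf : StrictMonoOn f S)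
    {s t : ℝ} (hs : s ∈ S) (ht : t ∈ S) (hfs : 0 < f s) (hft : 0 < f t) :
    1 / f s < 1 / f t ↔ t < s :=
  (one_div_lt_one_div hfs hft).trans (hf.lt_iff_lt ht hs)

theorem exists_one_div_eq_of_one_lt {f : ℝ → ℝ} (hf : ContinuousOn f (Icc 0 1)) (hf0 : f 0 = 0)
    (hf1 : f 1 = 1) {U : ℝ} (hU : 1 < U) : ∃ s ∈ Ioo 0 1, 1 / f s = U := by
  have hU' : 1 / U ∈ Ioo (f 0) (f 1) := by
    rw [hf0, hf1]
    exact ⟨by positivity, (div_lt_one (by positivity)).2 hU⟩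
  obtain ⟨s, hs, hfs⟩ := intermediate_value_Ioo zero_le_one hf hU'
  exact ⟨s, hs, by rw [hfs, one_div_one_div]⟩

theorem stmt6_general (f F : ℝ → ℝ) (sI swf : ℝ)
    (hf : ContDiff ℝ 2 f) (hf0 : f 0 = 0) (hf1 : f 1 = 1)
    (hf' : ∀ x ∈ Ioo (0:ℝ) 1, 0 < deriv f x)
    (hfpos : ∀ x ∈ Ioo (0:ℝ) 1, 0 < f x)
    (hsI : sI ∈ Ioo (0:ℝ) 1)
    (hconv : ∀ x ∈ Ioo (0:ℝ) sI, 0 < deriv (deriv f) x)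
    (hconc : ∀ x ∈ Ioo sI 1, deriv (deriv f) x < 0)
    (hswf : swf ∈ Ioo sI 1)
    (hroot : f swf = swf * deriv f swf)
    (hF : ∀ x ∈ Ioo (0:ℝ) 1, F (1 / f x) = -(x / f x)) :
    (∀ U ∈ Ioo (1:ℝ) (1 / f swf), 0 < deriv F U) ∧
    (∀ U ∈ Ioi (1 / f swf), deriv F U < 0) ∧
    1 / f swf < 1 / f sI := by
  have hd := hf.differentiable two_ne_zero
  have hd' := hf.differentiable_deriv_two
  have hmono : StrictMonoOn f (Icc 0 1) :=
    strictMonoOn_of_deriv_pos (convex_Icc 0 1) hd.continuous.continuousOn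
      (fun x hx => hf' x (by rwa [interior_Icc] at hx))
  have hswf' : swf ∈ Ioo 0 1 := ⟨hsI.1.trans hswf.1, hswf.2⟩
  have hlt : ∀ s ∈ Ioo (0:ℝ) 1, ∀ t ∈ Ioo (0:ℝ) 1, 1 / f s < 1 / f t ↔ t < s := fun s hs t ht =>
    hmono.one_div_lt_one_div_iff (Ioo_subset_Icc_self hs) (Ioo_subset_Icc_self ht)
      (hfpos s hs) (hfpos t ht)
  have hderiv : ∀ s ∈ Ioo (0:ℝ) 1,
      deriv F (1 / f s) = (f s - s * deriv f s) / deriv f s := fun s hs =>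
    (hasDerivAt_of_comp_one_div_eq (hf.contDiffAt.of_le one_le_two) (hfpos s hs).ne'
      (hf' s hs).ne' (eventually_of_mem (isOpen_Ioo.mem_nhds hs) hF)).deriv
  have hψmono := strictMonoOn_sub_mul_deriv hd hd' hsI.1.le hconc
  have hψanti := strictAntiOn_sub_mul_deriv hd hd' le_rfl hconv
  have hψswf : f swf - swf * deriv f swf = 0 := sub_eq_zero.2 hroot
  refine ⟨fun U hU => ?_, fun U hU => ?_, (hlt swf hswf' sI hsI).2 hswf.1⟩
  · obtain ⟨s, hs, rfl⟩ := exists_one_div_eq_of_one_lt hd.continuous.continuousOn hf0 hf1 hU.1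
    have hswfs : swf < s := (hlt s hs swf hswf').1 hU.2
    have hψ : 0 < f s - s * deriv f s := hψswf ▸
      hψmono ⟨hswf.1.le, hswf.2.le⟩ ⟨hswf.1.trans hswfs |>.le, hs.2.le⟩ hswfs
    rw [hderiv s hs]
    exact div_pos hψ (hf' s hs)
  · have h1U : 1 < U := (one_lt_one_div (hfpos swf hswf') (hf1 ▸ hmono
      (Ioo_subset_Icc_self hswf') (right_mem_Icc.2 zero_le_one) hswf.2)).trans hU
    obtain ⟨s, hs, rfl⟩ := exists_one_div_eq_of_one_lt hd.continuous.continuousOn hf0 hf1 h1U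
    have hψ : f s - s * deriv f s < 0 :=
      neg_of_strictAntiOn_of_strictMonoOn (ψ := fun x => f x - x * deriv f x) hψanti hψmono
        (by simp [hf0]) hψswf hsI.1.le ⟨hswf.1, hswf.2.le⟩ ⟨hs.1, (hlt swf hswf' s hs).1 hU⟩
    rw [hderiv s hs]
    exact div_neg_of_neg_of_pos hψ (hf' s hs)

/-- U^max = 1/f(s^wf) is the unique global maximum of the Lagrange flux F:
F' > 0 on (1, U^max), F' < 0 on (U^max, ∞), and U^max < U^I = 1/f(sI). -/
theorem stmt6 (f F : ℝ → ℝ) (sI swf : ℝ)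
    (hf : ContDiff ℝ 2 f) (hf0 : f 0 = 0) (hf1 : f 1 = 1)
    (hf' : ∀ x ∈ Ioo (0:ℝ) 1, 0 < deriv f x)
    (hfpos : ∀ x ∈ Ioo (0:ℝ) 1, 0 < f x)
    (hf_lim : Filter.Tendsto f (nhdsWithin 0 (Ioi 0)) (nhds 0))
    (hsI : sI ∈ Ioo (0:ℝ) 1)
    (hconv : ∀ x ∈ Ioo (0:ℝ) sI, 0 < deriv (deriv f) x)
    (hconc : ∀ x ∈ Ioo sI 1, deriv (deriv f) x < 0)
    (hswf : swf ∈ Ioo sI 1)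
    (hroot : f swf = swf * deriv f swf)
    (huniq : ∀ x ∈ Ioo (0:ℝ) 1, f x = x * deriv f x → x = swf)
    (hF : ∀ x ∈ Ioo (0:ℝ) 1, F (1 / f x) = -(x / f x)) :
    (∀ U ∈ Ioo (1:ℝ) (1 / f swf), 0 < deriv F U) ∧
    (∀ U ∈ Ioi (1 / f swf), deriv F U < 0) ∧
    1 / f swf < 1 / f sI :=
  stmt6_general f F sI swf hf hf0 hf1 hf' hfpos hsI hconv hconc hswf hroot hF
end

section
/- Let f : ℝ → ℝ be continuous on [s⁺, s⁻] (with s⁺ < s⁻ or s⁻ < s⁺), and set v = (f(s⁻) − f(s⁺))/(s⁻ − s⁺), Ψ(s) = f(s) − f(s⁻) − v(s − s⁻). If f is S-shaped (as above) then Ψ cannot vanish at an interior point of the interval between s⁺ and s⁻ without changing sign; hence Oleinik's condition Ψ(s)(s⁺ − s⁻) ≥ 0 for all s strictly between s⁺ and s⁻ is equivalent to the strict condition Ψ(s)(s⁺ − s⁻) > 0 there. -/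
/-!
Ψ is the flux minus its chord through `s⁺` and `s⁻`, so it vanishes at both endpoints and has the
same second derivative as the flux: strictly convex on `[0, s_I]`, strictly concave on `[s_I, 1]`.
Let `s₀` be an interior zero. If `s₀ ≤ s_I`, strict convexity between the zeros `min s⁺ s⁻` and `s₀`
makes Ψ negative just left of `s₀`; if `s₀ > s_I`, strict concavity on `[s_I, max s⁺ s⁻]` with zeros
`s₀` and `max s⁺ s⁻` does the same. Symmetrically Ψ is positive just right of `s₀`. So Ψ changes
sign at every interior zero, which rules out equality in the nonstrict Oleinik condition.
-/

open Set Filter Topology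

section ConvexAffine

variable {s : Set ℝ} {f : ℝ → ℝ}

theorem StrictConvexOn.add_affine (hf : StrictConvexOn ℝ s f) (m c : ℝ) :
    StrictConvexOn ℝ s (fun x => f x + (m * x + c)) :=
  hf.add_convexOn (((LinearMap.mulLeft ℝ m).convexOn hf.1).add_const c)

theorem StrictConcaveOn.add_affine (hf : StrictConcaveOn ℝ s f) (m c : ℝ) :
    StrictConcaveOn ℝ s (fun x => f x + (m * x + c)) :=
  hf.add_concaveOn (((LinearMap.mulLeft ℝ m).concaveOn hf.1).add_const c)

end ConvexAffine

section SignsBetweenZeros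

variable {s : Set ℝ} {g : ℝ → ℝ} {p q x : ℝ}

theorem StrictConvexOn.neg_between_zeros (hg : StrictConvexOn ℝ s g) (hp : p ∈ s) (hq : q ∈ s)
    (hgp : g p = 0) (hgq : g q = 0) (hx : x ∈ Ioo p q) : g x < 0 := by
  have hpq : p < q := hx.1.trans hx.2
  simpa [hgp, hgq] using
    hg.lt_on_openSegment hp hq hpq.ne (by rwa [openSegment_eq_Ioo hpq])

theorem StrictConcaveOn.pos_between_zeros (hg : StrictConcaveOn ℝ s g) (hp : p ∈ s) (hq : q ∈ s)
    (hgp : g p = 0) (hgq : g q = 0) (hx : x ∈ Ioo p q) : 0 < g x := by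
  have hpq : p < q := hx.1.trans hx.2
  simpa [hgp, hgq] using
    hg.lt_on_openSegment hp hq hpq.ne (by rwa [openSegment_eq_Ioo hpq])

theorem StrictConvexOn.pos_right_of_zeros (hg : StrictConvexOn ℝ s g) (hp : p ∈ s) (hx : x ∈ s)
    (hgp : g p = 0) (hgq : g q = 0) (hpq : p < q) (hqx : q < x) : 0 < g x := by
  have hslope := hg.slope_strict_mono_adjacent hp hx hpq hqx
  rw [hgp, hgq, sub_zero, zero_div, sub_zero] at hslope
  exact (div_pos_iff_of_pos_right (sub_pos.2 hqx)).1 hslope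

theorem StrictConcaveOn.neg_left_of_zeros (hg : StrictConcaveOn ℝ s g) (hx : x ∈ s) (hq : q ∈ s)
    (hgp : g p = 0) (hgq : g q = 0) (hxp : x < p) (hpq : p < q) : g x < 0 := by
  have hslope := hg.slope_anti_adjacent hx hq hxp hpq
  rw [hgp, hgq, sub_zero, zero_div, zero_sub] at hslope
  exact neg_pos.1 ((div_pos_iff_of_pos_right (sub_pos.2 hxp)).1 hslope)

end SignsBetweenZeros

section ConvexConcave

variable {g : ℝ → ℝ} {a c b α β s₀ : ℝ}
  (hcvx : StrictConvexOn ℝ (Icc a c) g) (hccv : StrictConcaveOn ℝ (Icc c b) g)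
  (hα : a ≤ α) (hβ : β ≤ b) (hgα : g α = 0) (hgβ : g β = 0)
  (hs₀ : s₀ ∈ Ioo α β) (hgs₀ : g s₀ = 0)
include hcvx hccv hα hβ hgα hgβ hs₀ hgs₀

theorem eventually_neg_nhdsLT_of_convexConcave : ∀ᶠ x in 𝓝[<] s₀, g x < 0 := by
  rcases le_or_gt s₀ c with hc | hc
  · filter_upwards [Ioo_mem_nhdsLT hs₀.1] with x hx
    exact hcvx.neg_between_zeros ⟨hα, hs₀.1.le.trans hc⟩ ⟨hα.trans hs₀.1.le, hc⟩ hgα hgs₀ hx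
  · filter_upwards [Ioo_mem_nhdsLT hc] with x hx
    exact hccv.neg_left_of_zeros ⟨hx.1.le, hx.2.le.trans (hs₀.2.le.trans hβ)⟩
      ⟨hc.le.trans hs₀.2.le, hβ⟩ hgs₀ hgβ hx.2 hs₀.2

theorem eventually_pos_nhdsGT_of_convexConcave : ∀ᶠ x in 𝓝[>] s₀, 0 < g x := by
  rcases lt_or_ge s₀ c with hc | hc
  · filter_upwards [Ioo_mem_nhdsGT hc] with x hx
    exact hcvx.pos_right_of_zeros ⟨hα, hs₀.1.le.trans hc.le⟩
      ⟨(hα.trans hs₀.1.le).trans hx.1.le, hx.2.le⟩ hgα hgs₀ hs₀.1 hx.1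
  · filter_upwards [Ioo_mem_nhdsGT hs₀.2] with x hx
    exact hccv.pos_between_zeros ⟨hc, hs₀.2.le.trans hβ⟩ ⟨hc.trans hs₀.2.le, hβ⟩ hgs₀ hgβ hx

end ConvexConcave

theorem exists_mul_neg_near_of_sign_change {g : ℝ → ℝ} {α β s₀ ε : ℝ} (hs₀ : s₀ ∈ Ioo α β)
    (hneg : ∀ᶠ x in 𝓝[<] s₀, g x < 0) (hpos : ∀ᶠ x in 𝓝[>] s₀, 0 < g x) (hε : 0 < ε) :
    ∃ a ∈ Ioo α β, ∃ b ∈ Ioo α β, |a - s₀| < ε ∧ |b - s₀| < ε ∧ g a * g b < 0 := by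
  obtain ⟨a, hga, ha⟩ :=
    (hneg.and (Ioo_mem_nhdsLT (max_lt hs₀.1 (sub_lt_self s₀ hε)))).exists
  obtain ⟨b, hgb, hb⟩ :=
    (hpos.and (Ioo_mem_nhdsGT (lt_min hs₀.2 (lt_add_of_pos_right s₀ hε)))).exists
  rw [max_lt_iff] at ha
  rw [lt_min_iff] at hb
  refine ⟨a, ⟨ha.1.1, ha.2.trans hs₀.2⟩, b, ⟨hs₀.1.trans hb.1, hb.2.1⟩, ?_, ?_,
    mul_neg_of_neg_of_pos hga hgb⟩
  · rw [abs_lt]; constructor <;> linarith [ha.1.2, ha.2]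
  · rw [abs_lt]; constructor <;> linarith [hb.1, hb.2.2]

theorem nonneg_iff_pos_of_sign_change {Ψ : ℝ → ℝ} {S : Set ℝ} {d : ℝ} (hd : d ≠ 0)
    (hchange : ∀ s₀ ∈ S, Ψ s₀ = 0 → ∃ a ∈ S, ∃ b ∈ S, Ψ a * Ψ b < 0) :
    (∀ s ∈ S, 0 ≤ Ψ s * d) ↔ (∀ s ∈ S, 0 < Ψ s * d) := by
  refine ⟨fun h s hs => (h s hs).lt_of_ne fun hzero => ?_, fun h s hs => (h s hs).le⟩
  obtain ⟨a, ha, b, hb, hab⟩ :=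
    hchange s hs ((mul_eq_zero.1 hzero.symm).resolve_right hd)
  have hsq : 0 < d ^ 2 := by positivity
  nlinarith [mul_nonneg (h a ha) (h b hb), mul_neg_of_neg_of_pos hab hsq]

theorem stmt8_general (f : ℝ → ℝ) (sI sp sm : ℝ)
    (hf : ContDiff ℝ 2 f)
    (hconv : ∀ x ∈ Ioo (0:ℝ) sI, 0 < deriv (deriv f) x)
    (hconc : ∀ x ∈ Ioo sI 1, deriv (deriv f) x < 0)
    (hsp : sp ∈ Icc (0:ℝ) 1) (hsm : sm ∈ Icc (0:ℝ) 1) (hne : sp ≠ sm) :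
    letI v : ℝ := (f sm - f sp) / (sm - sp)
    letI Ψ : ℝ → ℝ := fun s => f s - f sm - v * (s - sm)
    (∀ s₀ ∈ uIoo sp sm, Ψ s₀ = 0 → ∀ ε > 0, ∃ a ∈ uIoo sp sm, ∃ b ∈ uIoo sp sm,
        |a - s₀| < ε ∧ |b - s₀| < ε ∧ Ψ a * Ψ b < 0) ∧
    ((∀ s ∈ uIoo sp sm, 0 ≤ Ψ s * (sp - sm)) ↔
      (∀ s ∈ uIoo sp sm, 0 < Ψ s * (sp - sm))) := by
  set v : ℝ := (f sm - f sp) / (sm - sp) with hv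
  set Ψ : ℝ → ℝ := fun s => f s - f sm - v * (s - sm) with hΨdef
  have hΨ : Ψ = fun x => f x + (-v * x + (v * sm - f sm)) := by
    funext x; simp only [hΨdef]; ring
  have hΨsm : Ψ sm = 0 := by simp only [hΨdef]; ring
  have hΨsp : Ψ sp = 0 := by
    simp only [hΨdef, hv]; field_simp [sub_ne_zero.2 hne.symm]; ring
  have hcvx : StrictConvexOn ℝ (Icc 0 sI) Ψ := hΨ ▸
    (strictConvexOn_of_deriv2_pos (convex_Icc 0 sI) hf.continuous.continuousOn fun x hx =>
      hconv x (by rwa [interior_Icc] at hx)).add_affine _ _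
  have hccv : StrictConcaveOn ℝ (Icc sI 1) Ψ := hΨ ▸
    (strictConcaveOn_of_deriv2_neg (convex_Icc sI 1) hf.continuous.continuousOn fun x hx =>
      hconc x (by rwa [interior_Icc] at hx)).add_affine _ _
  have hmin : Ψ (min sp sm) = 0 := min_rec' (fun x => Ψ x = 0) hΨsp hΨsm
  have hmax : Ψ (max sp sm) = 0 := max_rec' (fun x => Ψ x = 0) hΨsp hΨsm
  have hlo : 0 ≤ min sp sm := le_min hsp.1 hsm.1
  have hhi : max sp sm ≤ 1 := max_le hsp.2 hsm.2
  have hsign : ∀ s₀ ∈ uIoo sp sm, Ψ s₀ = 0 → ∀ ε > 0, ∃ a ∈ uIoo sp sm, ∃ b ∈ uIoo sp sm,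
      |a - s₀| < ε ∧ |b - s₀| < ε ∧ Ψ a * Ψ b < 0 := fun s₀ hs₀ hΨs₀ _ hε =>
    exists_mul_neg_near_of_sign_change hs₀
      (eventually_neg_nhdsLT_of_convexConcave hcvx hccv hlo hhi hmin hmax hs₀ hΨs₀)
      (eventually_pos_nhdsGT_of_convexConcave hcvx hccv hlo hhi hmin hmax hs₀ hΨs₀) hε
  refine ⟨hsign, nonneg_iff_pos_of_sign_change (sub_ne_zero.2 hne) fun s₀ hs₀ hΨs₀ => ?_⟩
  obtain ⟨a, ha, b, hb, -, -, hab⟩ := hsign s₀ hs₀ hΨs₀ 1 one_pos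
  exact ⟨a, ha, b, hb, hab⟩

/-- For an S-shaped flux, Ψ cannot vanish at an interior point of the interval between
s⁺ and s⁻ without changing sign; hence the nonstrict and strict Oleinik conditions
are equivalent. -/
theorem stmt8 (f : ℝ → ℝ) (sI sp sm : ℝ)
    (hf : ContDiff ℝ 2 f) (hf0 : f 0 = 0) (hf1 : f 1 = 1)
    (hf' : ∀ x ∈ Ioo (0:ℝ) 1, 0 < deriv f x)
    (hf'0 : deriv f 0 = 0) (hf'1 : deriv f 1 = 0)
    (hsI : sI ∈ Ioo (0:ℝ) 1)
    (hconv : ∀ x ∈ Ioo (0:ℝ) sI, 0 < deriv (deriv f) x)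
    (hconc : ∀ x ∈ Ioo sI 1, deriv (deriv f) x < 0)
    (hsp : sp ∈ Icc (0:ℝ) 1) (hsm : sm ∈ Icc (0:ℝ) 1) (hne : sp ≠ sm) :
    letI v : ℝ := (f sm - f sp) / (sm - sp)
    letI Ψ : ℝ → ℝ := fun s => f s - f sm - v * (s - sm)
    (∀ s₀ ∈ uIoo sp sm, Ψ s₀ = 0 → ∀ ε > 0, ∃ a ∈ uIoo sp sm, ∃ b ∈ uIoo sp sm,
        |a - s₀| < ε ∧ |b - s₀| < ε ∧ Ψ a * Ψ b < 0) ∧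
    ((∀ s ∈ uIoo sp sm, 0 ≤ Ψ s * (sp - sm)) ↔
      (∀ s ∈ uIoo sp sm, 0 < Ψ s * (sp - sm))) :=
  stmt8_general f sI sp sm hf hconv hconc hsp hsm hne
end

section
/- Let f : (0,1] → (0,1] be C¹, increasing, f(1)=1, and fix s⁺, s⁻ ∈ (0,1] with s⁺ ≠ s⁻ and f(s⁺), f(s⁻) > 0. Define U^∓ = 1/f(s^±), F(U^∓) = −s^±/f(s^±), v = (f(s⁻)−f(s⁺))/(s⁻−s⁺), v* = (F(U⁻)−F(U⁺))/(U⁻−U⁺). Then the Lax inequality f'(s⁺) ≤ v holds if and only if F'(U⁻) ≥ v*, where F'(U(s)) = f(s)/f'(s) − s. Equality holds on one side if and only if it holds on the other. -/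
open Set

/-- The Lax inequality f'(s⁺) ≤ v is equivalent to F'(U⁻) ≥ v* in Lagrange coordinates,
with equality on one side iff on the other. Here U∓ = 1/f(s±), F(U∓) = −s±/f(s±),
and F'(U(s)) = f(s)/f'(s) − s. -/
theorem stmt9 (f : ℝ → ℝ) (sp sm : ℝ)
    (hsp : sp ∈ Ioc (0:ℝ) 1) (hsm : sm ∈ Ioc (0:ℝ) 1) (hne : sp ≠ sm)
    (hmono : StrictMonoOn f (Ioc (0:ℝ) 1)) (hf1 : f 1 = 1)
    (hfp : 0 < f sp) (hfm : 0 < f sm) (hf'p : 0 < deriv f sp) :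
    letI Um : ℝ := 1 / f sp
    letI Up : ℝ := 1 / f sm
    letI FUm : ℝ := -(sp / f sp)
    letI FUp : ℝ := -(sm / f sm)
    letI v : ℝ := (f sm - f sp) / (sm - sp)
    letI vs : ℝ := (FUm - FUp) / (Um - Up)
    (deriv f sp ≤ v ↔ vs ≤ f sp / deriv f sp - sp) ∧
    (deriv f sp = v ↔ f sp / deriv f sp - sp = vs) := by
  set a := f sp with ha
  set b := f sm with hb
  set d := deriv f sp with hd
  set E : ℝ := (b - a) - d * (sm - sp) with hE
  have hane : a ≠ 0 := ne_of_gt hfp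
  have hbne : b ≠ 0 := ne_of_gt hfm
  have hdne : d ≠ 0 := ne_of_gt hf'p
  have hssne : sm - sp ≠ 0 := sub_ne_zero.2 (Ne.symm hne)
  -- signs
  rcases hne.lt_or_gt with h | h
  · -- sp < sm
    have hss : (0:ℝ) < sm - sp := by linarith
    have hba : a < b := hmono hsp hsm h
    have hbane : b - a ≠ 0 := by intro hc; nlinarith
    have hidv : (b - a) / (sm - sp) - d = E / (sm - sp) := by
      field_simp [hE, hssne]; ring
    have hidvs : a / d - sp - (-(sp / a) - -(sm / b)) / (1 / a - 1 / b)
        = a * E / (d * (b - a)) := by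
      field_simp [hE, hssne]; ring
    have hdba : (0:ℝ) < d * (b - a) := by nlinarith
    constructor
    · rw [← sub_nonneg, hidv, ← sub_nonneg (b := (-(sp / a) - -(sm / b)) / (1 / a - 1 / b)), hidvs]
      constructor
      · intro hh
        have hE0 : 0 ≤ E := by
          by_contra hc
          push_neg at hc
          have : E / (sm - sp) < 0 := div_neg_of_neg_of_pos hc hss
          linarith
        positivity
      · intro hh
        have hE0 : 0 ≤ E := by
          by_contra hc
          push_neg at hc
          have : a * E / (d * (b - a)) < 0 := by
            apply div_neg_of_neg_of_pos _ hdba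
            nlinarith
          linarith
        positivity
    · rw [eq_comm (a := d), ← sub_eq_zero (a := (b - a) / (sm - sp)), hidv,
        ← sub_eq_zero (a := a / d - sp), hidvs,
        div_eq_zero_iff, div_eq_zero_iff]
      constructor
      · rintro (h1 | h1)
        · left; rw [h1]; ring
        · exact absurd h1 (by intro hc; linarith)
      · rintro (h1 | h1)
        · left
          rcases mul_eq_zero.1 h1 with h2 | h2
          · exact absurd h2 hane
          · exact h2
        · exact absurd h1 (ne_of_gt hdba)
  · -- sm < sp
    have hss : sm - sp < 0 := by linarith
    have hba : b < a := hmono hsm hsp h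
    have hbane : b - a ≠ 0 := by intro hc; nlinarith
    have hidv : (b - a) / (sm - sp) - d = E / (sm - sp) := by
      field_simp [hE, hssne]; ring
    have hidvs : a / d - sp - (-(sp / a) - -(sm / b)) / (1 / a - 1 / b)
        = a * E / (d * (b - a)) := by
      field_simp [hE, hssne]; ring
    have hdba : d * (b - a) < 0 := by nlinarith
    constructor
    · rw [← sub_nonneg, hidv, ← sub_nonneg (b := (-(sp / a) - -(sm / b)) / (1 / a - 1 / b)), hidvs]
      constructor
      · intro hh
        have hE0 : E ≤ 0 := by
          by_contra hc
          push_neg at hc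
          have : E / (sm - sp) < 0 := div_neg_of_pos_of_neg hc hss
          linarith
        have : a * E ≤ 0 := by nlinarith
        rw [div_nonneg_iff]; exact Or.inr ⟨this, le_of_lt hdba⟩
      · intro hh
        have hE0 : E ≤ 0 := by
          by_contra hc
          push_neg at hc
          have hq : 0 < a * E := by nlinarith
          have : a * E / (d * (b - a)) < 0 := div_neg_of_pos_of_neg hq hdba
          linarith
        rw [div_nonneg_iff]; exact Or.inr ⟨by nlinarith, le_of_lt hss⟩
    · rw [eq_comm (a := d), ← sub_eq_zero (a := (b - a) / (sm - sp)), hidv,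
        ← sub_eq_zero (a := a / d - sp), hidvs,
        div_eq_zero_iff, div_eq_zero_iff]
      constructor
      · rintro (h1 | h1)
        · left; rw [h1]; ring
        · exact absurd h1 (by intro hc; linarith)
      · rintro (h1 | h1)
        · left
          rcases mul_eq_zero.1 h1 with h2 | h2
          · exact absurd h2 hane
          · exact h2
        · exact absurd h1 (ne_of_lt hdba)
end

section
/- Let s, s⁺, s⁻ ∈ (0,1] be distinct with f(s), f(s⁺), f(s⁻) > 0, and set U = 1/f(s), U^∓ = 1/f(s^±), F(U) = −s/f(s) etc. If the three points (s, f(s)), (s⁺, f(s⁺)), (s⁻, f(s⁻)) are collinear, then the three points (U, F(U)), (U⁺, F(U⁺)), (U⁻, F(U⁻)) are collinear, and conversely. -/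
open Set

/-- Collinearity of states on the flux graph is preserved under the Lagrange
transformation (U, F) = (1/f, −s/f), and conversely. Here U = 1/f(s),
U⁻ = 1/f(s⁺), U⁺ = 1/f(s⁻). -/
theorem stmt10 (f : ℝ → ℝ) (s sp sm : ℝ)
    (hs : s ∈ Ioc (0:ℝ) 1) (hsp : sp ∈ Ioc (0:ℝ) 1) (hsm : sm ∈ Ioc (0:ℝ) 1)
    (hne1 : s ≠ sp) (hne2 : s ≠ sm) (hne3 : sp ≠ sm)
    (h1 : 0 < f s) (h2 : 0 < f sp) (h3 : 0 < f sm)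
    (hd1 : f s ≠ f sp) (hd2 : f s ≠ f sm) (hd3 : f sp ≠ f sm) :
    ((f s - f sm) * (sp - sm) = (f sp - f sm) * (s - sm)) ↔
    ((-(s / f s) - -(sm / f sm)) * (1 / f sp - 1 / f sm)
      = (-(sp / f sp) - -(sm / f sm)) * (1 / f s - 1 / f sm)) := by
  have ha := h1.ne'
  have hb := h2.ne'
  have hc := h3.ne'
  have key : (-(s / f s) - -(sm / f sm)) * (1 / f sp - 1 / f sm)
      - (-(sp / f sp) - -(sm / f sm)) * (1 / f s - 1 / f sm)
      = (-(1 / (f s * f sp * f sm)))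
        * ((f s - f sm) * (sp - sm) - (f sp - f sm) * (s - sm)) := by
    field_simp
    ring
  constructor
  · intro h
    have : (f s - f sm) * (sp - sm) - (f sp - f sm) * (s - sm) = 0 := by linarith
    have := key.trans (by rw [this, mul_zero])
    linarith
  · intro h
    have h0 : (-(1 / (f s * f sp * f sm)))
        * ((f s - f sm) * (sp - sm) - (f sp - f sm) * (s - sm)) = 0 := by
      rw [← key]; linarith
    have hne : (-(1 / (f s * f sp * f sm))) ≠ 0 := by
      simp [ha, hb, hc]
    have := (mul_eq_zero.mp h0).resolve_left hne
    linarith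
end

section
/- Let F : I → ℝ be continuous on an interval I, fix U⁺ ≠ U⁻ in I, let v* = (F(U⁺) − F(U⁻))/(U⁺ − U⁻), and suppose the Oleinik condition holds: for all γ ∈ (0,1), (γF(U⁻) + (1−γ)F(U⁺) − F(γU⁻ + (1−γ)U⁺))·sign(U⁺−U⁻) ≤ 0. Define G(U,k) = (F(U)−F(k))·sign(U−k). Then for every k ∈ ℝ, G(U⁺,k) − G(U⁻,k) ≤ v*·(|U⁺−k| − |U⁻−k|). -/
open Set

/-- Oleinik's E-condition implies the Kružkov entropy inequality on the shock for
the entropy pairs (|U − k|, G(U,k)), G(U,k) = (F(U) − F(k))·sign(U − k). -/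
theorem stmt11 (F : ℝ → ℝ) (I : Set ℝ) (hI : I.OrdConnected)
    (hF : ContinuousOn F I) (Up Um : ℝ) (hUp : Up ∈ I) (hUm : Um ∈ I) (hne : Up ≠ Um)
    (hOleinik : ∀ γ ∈ Ioo (0:ℝ) 1,
      (γ * F Um + (1 - γ) * F Up - F (γ * Um + (1 - γ) * Up)) * Real.sign (Up - Um) ≤ 0) :
    ∀ k : ℝ, (F Up - F k) * Real.sign (Up - k) - (F Um - F k) * Real.sign (Um - k)
      ≤ (F Up - F Um) / (Up - Um) * (|Up - k| - |Um - k|) := by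
  intro k
  have hd : Up - Um ≠ 0 := sub_ne_zero.mpr hne
  rcases lt_or_gt_of_ne hne with h | h
  · -- Up < Um
    have hDneg : Up - Um < 0 := by linarith
    rcases le_or_gt k Up with hk | hk
    · -- k ≤ Up < Um : equality
      rcases eq_or_lt_of_le hk with heq | hk
      · rw [← heq]
        simp only [sub_self, Real.sign_zero, mul_zero, zero_mul, abs_zero]
        rw [Real.sign_of_pos (by linarith : (0:ℝ) < Um - k),
            abs_of_pos (by linarith : (0:ℝ) < Um - k),
            div_mul_eq_mul_div, le_div_iff_of_neg (by linarith : k - Um < 0)]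
        exact le_of_eq (by ring)
      · rw [Real.sign_of_pos (by linarith : (0:ℝ) < Up - k),
            Real.sign_of_pos (by linarith : (0:ℝ) < Um - k),
            abs_of_pos (by linarith : (0:ℝ) < Up - k),
            abs_of_pos (by linarith : (0:ℝ) < Um - k),
            div_mul_eq_mul_div, le_div_iff_of_neg hDneg]
        exact le_of_eq (by ring)
    · rcases lt_or_ge k Um with hk2 | hk2
      · -- Up < k < Um : Oleinik
        set g : ℝ := (Up - k) / (Up - Um) with hgdef
        have hg1 : g * (Up - Um) = Up - k := div_mul_cancel₀ _ hd
        have hg0 : 0 < g := by nlinarith [hg1]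
        have hglt : g < 1 := by nlinarith [hg1]
        have hkval : g * Um + (1 - g) * Up = k := by linear_combination -hg1
        have hO := hOleinik g ⟨hg0, hglt⟩
        rw [hkval, Real.sign_of_neg hDneg] at hO
        rw [Real.sign_of_neg (by linarith : Up - k < 0),
            Real.sign_of_pos (by linarith : (0:ℝ) < Um - k),
            abs_of_neg (by linarith : Up - k < 0),
            abs_of_pos (by linarith : (0:ℝ) < Um - k),
            div_mul_eq_mul_div, le_div_iff_of_neg hDneg]
        have key : (g * F Um + (1 - g) * F Up - F k) * (Up - Um) ≤ 0 := by
          nlinarith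
        have h2 : (F Up - F Um) * (g * (Up - Um)) = (F Up - F Um) * (Up - k) := by
          rw [hg1]
        nlinarith [key, h2]
      · -- Um ≤ k : equality
        rcases eq_or_lt_of_le hk2 with heq | hk2
        · rw [heq]
          simp only [sub_self, Real.sign_zero, mul_zero, zero_mul, abs_zero]
          rw [Real.sign_of_neg (by linarith : Up - k < 0),
              abs_of_neg (by linarith : Up - k < 0),
              div_mul_eq_mul_div, le_div_iff_of_neg (by linarith : Up - k < 0)]
          exact le_of_eq (by ring)
        · rw [Real.sign_of_neg (by linarith : Up - k < 0),
              Real.sign_of_neg (by linarith : Um - k < 0),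
              abs_of_neg (by linarith : Up - k < 0),
              abs_of_neg (by linarith : Um - k < 0),
              div_mul_eq_mul_div, le_div_iff_of_neg hDneg]
          exact le_of_eq (by ring)
  · -- Um < Up
    have hDpos : (0:ℝ) < Up - Um := by linarith
    rcases le_or_gt k Um with hk | hk
    · -- k ≤ Um < Up : equality
      rcases eq_or_lt_of_le hk with heq | hk
      · rw [← heq]
        simp only [sub_self, Real.sign_zero, mul_zero, zero_mul, abs_zero]
        rw [Real.sign_of_pos (by linarith : (0:ℝ) < Up - k),
            abs_of_pos (by linarith : (0:ℝ) < Up - k),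
            div_mul_eq_mul_div, le_div_iff₀ (by linarith : (0:ℝ) < Up - k)]
        exact le_of_eq (by ring)
      · rw [Real.sign_of_pos (by linarith : (0:ℝ) < Up - k),
            Real.sign_of_pos (by linarith : (0:ℝ) < Um - k),
            abs_of_pos (by linarith : (0:ℝ) < Up - k),
            abs_of_pos (by linarith : (0:ℝ) < Um - k),
            div_mul_eq_mul_div, le_div_iff₀ hDpos]
        exact le_of_eq (by ring)
    · rcases lt_or_ge k Up with hk2 | hk2
      · -- Um < k < Up : Oleinik
        set g : ℝ := (Up - k) / (Up - Um) with hgdef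
        have hg1 : g * (Up - Um) = Up - k := div_mul_cancel₀ _ hd
        have hg0 : 0 < g := div_pos (by linarith) hDpos
        have hglt : g < 1 := (div_lt_one hDpos).mpr (by linarith)
        have hkval : g * Um + (1 - g) * Up = k := by linear_combination -hg1
        have hO := hOleinik g ⟨hg0, hglt⟩
        rw [hkval, Real.sign_of_pos hDpos, mul_one] at hO
        rw [Real.sign_of_pos (by linarith : (0:ℝ) < Up - k),
            Real.sign_of_neg (by linarith : Um - k < 0),
            abs_of_pos (by linarith : (0:ℝ) < Up - k),
            abs_of_neg (by linarith : Um - k < 0),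
            div_mul_eq_mul_div, le_div_iff₀ hDpos]
        have key : (g * F Um + (1 - g) * F Up - F k) * (Up - Um) ≤ 0 := by
          nlinarith
        have h2 : (F Up - F Um) * (g * (Up - Um)) = (F Up - F Um) * (Up - k) := by
          rw [hg1]
        nlinarith [key, h2]
      · -- Up ≤ k : equality
        rcases eq_or_lt_of_le hk2 with heq | hk2
        · rw [heq]
          simp only [sub_self, Real.sign_zero, mul_zero, zero_mul, abs_zero]
          rw [Real.sign_of_neg (by linarith : Um - k < 0),
              abs_of_neg (by linarith : Um - k < 0),
              div_mul_eq_mul_div, le_div_iff₀ (by linarith : (0:ℝ) < k - Um)]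
          exact le_of_eq (by ring)
        · rw [Real.sign_of_neg (by linarith : Up - k < 0),
              Real.sign_of_neg (by linarith : Um - k < 0),
              abs_of_neg (by linarith : Up - k < 0),
              abs_of_neg (by linarith : Um - k < 0),
              div_mul_eq_mul_div, le_div_iff₀ hDpos]
          exact le_of_eq (by ring)
end
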